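/- arXiv:2205.02755 — 3 statements merged into one kernel-verified Lean document; each statement's English description precedes it below -/
import Mathlib

section
/- For all t ∈ (0,2) and α ∈ (0,π), the quantity F(t,α) = ln 2 + ln sin(α/2) + (cot²(α/2)/2)·(2·ln cos(α/2) − ln(1 − t²/4)) − ln t is nonnegative. -/
open Real

theorem stmt_6 (t α : ℝ) (ht : t ∈ Set.Ioo 0 2) (hα : α ∈ Set.Ioo 0 π) :
    0 ≤ Real.log 2 + Real.log (Real.sin (α / 2))
        + Real.cot (α / 2) ^ 2 / 2
          * (2 * Real.log (Real.cos (α / 2)) - Real.log (1 - t ^ 2 / 4))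
        - Real.log t := by
  obtain ⟨ht0, ht2⟩ := ht
  obtain ⟨hα0, hαπ⟩ := hα
  have hπ := Real.pi_pos
  have hs : 0 < Real.sin (α / 2) :=
    Real.sin_pos_of_pos_of_lt_pi (by linarith) (by linarith)
  have hc : 0 < Real.cos (α / 2) :=
    Real.cos_pos_of_mem_Ioo ⟨by linarith, by linarith⟩
  set s := Real.sin (α / 2) with hs_def
  set c := Real.cos (α / 2) with hc_def
  have hsc : s ^ 2 + c ^ 2 = 1 := Real.sin_sq_add_cos_sq _
  have h1 : 0 < 1 - t ^ 2 / 4 := by nlinarith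
  have hcot : Real.cot (α / 2) ^ 2 = c ^ 2 / s ^ 2 := by
    rw [Real.cot_eq_cos_div_sin, div_pow]
  have L1 : Real.log t - Real.log 2 - Real.log s ≤ t / (2 * s) - 1 := by
    have := Real.log_le_sub_one_of_pos (show 0 < t / (2 * s) by positivity)
    rwa [Real.log_div (ne_of_gt ht0) (by positivity), Real.log_mul (by norm_num) hs.ne',
      sub_add_eq_sub_sub] at this
  have L2 : Real.log (1 - t ^ 2 / 4) - 2 * Real.log c ≤ (1 - t ^ 2 / 4) / c ^ 2 - 1 := by
    have := Real.log_le_sub_one_of_pos (show 0 < (1 - t ^ 2 / 4) / c ^ 2 by positivity)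
    rwa [Real.log_div h1.ne' (by positivity), Real.log_pow] at this
  have hk : 0 < c ^ 2 / s ^ 2 / 2 := by positivity
  have key : (1 - t / (2 * s)) + c ^ 2 / s ^ 2 / 2 * (1 - (1 - t ^ 2 / 4) / c ^ 2)
      = (t / (2 * s) - 1) ^ 2 / 2 := by
    have hc2 : c ^ 2 = 1 - s ^ 2 := by linarith
    rw [hc2]
    have hs2 : (0:ℝ) < 1 - s ^ 2 := by nlinarith
    field_simp
    ring
  have hB : c ^ 2 / s ^ 2 / 2 * (1 - (1 - t ^ 2 / 4) / c ^ 2)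
      ≤ c ^ 2 / s ^ 2 / 2 * (2 * Real.log c - Real.log (1 - t ^ 2 / 4)) := by
    apply mul_le_mul_of_nonneg_left _ hk.le
    linarith
  have hsq : 0 ≤ (t / (2 * s) - 1) ^ 2 / 2 := by positivity
  rw [hcot]
  linarith
end

section
/- For every p ∈ S², (1/(4π)) · ∫_{q ∈ S²} ln‖p − q‖ dσ(q) = ln 2 − 1/2. -/
open MeasureTheory Real Filter
open scoped RealInnerProductSpace

noncomputable abbrev E3 := EuclideanSpace ℝ (Fin 3)

noncomputable abbrev S2 := Metric.sphere (0 : E3) 1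

/-- The surface measure on the unit sphere `S²` (total mass `4π`). -/
noncomputable def σ2 : Measure S2 := (volume : Measure E3).toSphere

/-!
Archimedes' hat-box theorem: for a unit vector `p`, the push-forward of the surface measure under
`q ↦ ⟪p, q⟫` is `2π` times Lebesgue measure on `(-1, 1)`. Since `‖p - q‖² = 2 - 2⟪p, q⟫` on the
sphere, the integral is `π ∫_{-1}^{1} log (2 - 2t) dt = 4π log 2 - 2π`.

For the hat-box theorem, `toSphere` is a cone measure, so a sphere integral is `3` times a ball
integral of a function of `⟪p, x⟫ / ‖x‖`. In cylindrical coordinates `x = a p + y` around `p`, with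
`v = a² + ‖y‖²`, the ball becomes `{a² < v < 1}` carrying density `π`; the substitution `a = √v t`
turns each slice `|a| < √v` into `(-1, 1)` at the cost of a factor `√v`, and `∫₀¹ √v dv = 2/3`.
-/

open Set Metric Module
open scoped ENNReal

section SphereToBall

variable {E : Type*} [NormedAddCommGroup E] [NormedSpace ℝ E] [MeasurableSpace E] [BorelSpace E]
  [FiniteDimensional ℝ E] (μ : Measure E) [μ.IsAddHaarMeasure]

theorem lintegral_toSphere_eq_finrank_mul_setLIntegral_ball {φ : E → ℝ≥0∞} (hφ : Measurable φ) :
    ∫⁻ q, φ q ∂μ.toSphere = finrank ℝ E * ∫⁻ x in ball (0 : E) 1, φ (‖x‖⁻¹ • x) ∂μ := by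
  rcases subsingleton_or_nontrivial E with hE | hE
  · simp [(μ.toSphere_eq_zero_iff).2 hE, finrank_zero_of_subsingleton]
  set one : Ioi (0 : ℝ) := ⟨1, mem_Ioi.2 one_pos⟩
  have hball : (∫⁻ q, φ q ∂μ.toSphere) * Measure.volumeIoiPow (finrank ℝ E - 1) (Iio one) =
      ∫⁻ x in ball (0 : E) 1, φ (‖x‖⁻¹ • x) ∂μ := by
    have hmeas : Measurable fun z : sphere (0 : E) 1 × Ioi (0 : ℝ) =>
        φ z.1 * (Iio one).indicator 1 z.2 :=
      (hφ.comp (measurable_subtype_coe.comp measurable_fst)).mul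
        ((measurable_one.indicator measurableSet_Iio).comp measurable_snd)
    calc _ = (∫⁻ q, φ q ∂μ.toSphere) *
          ∫⁻ r, (Iio one).indicator 1 r ∂Measure.volumeIoiPow (finrank ℝ E - 1) := by
          rw [lintegral_indicator_one measurableSet_Iio]
      _ = ∫⁻ z, φ z.1 * (Iio one).indicator 1 z.2
          ∂(μ.toSphere.prod (Measure.volumeIoiPow (finrank ℝ E - 1))) :=
          (lintegral_prod_mul (hφ.comp measurable_subtype_coe).aemeasurable
            ((measurable_one.indicator measurableSet_Iio).aemeasurable)).symm
      _ = ∫⁻ x : ({(0 : E)}ᶜ : Set E), (ball (0 : E) 1).indicator (fun x => φ (‖x‖⁻¹ • x)) x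
          ∂(μ.comap Subtype.val) := by
          rw [← (μ.measurePreserving_homeomorphUnitSphereProd).lintegral_comp hmeas]
          congr with x
          by_cases hx : ‖(x : E)‖ < 1 <;> simp [hx, one, ← Subtype.coe_lt_coe]
      _ = _ := by
          rw [lintegral_subtype_comap (measurableSet_singleton 0).compl, restrict_compl_singleton,
            lintegral_indicator measurableSet_ball]
  have hpos : 0 < finrank ℝ E := finrank_pos
  have hdim : ((finrank ℝ E - 1 : ℕ) : ℝ) + 1 = finrank ℝ E := by
    rw [Nat.cast_pred hpos, sub_add_cancel]
  rw [← hball, Measure.volumeIoiPow_apply_Iio, one_pow, hdim, one_div,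
    ENNReal.ofReal_inv_of_pos (by positivity), ENNReal.ofReal_natCast, mul_left_comm,
    ENNReal.mul_inv_cancel (by simp [hpos.ne']) (by simp), mul_one]

end SphereToBall

theorem setLIntegral_Ioi_zero_eq_comp_sq (g : ℝ → ℝ≥0∞) :
    ∫⁻ u in Ioi 0, g u = ∫⁻ r in Ioi 0, ENNReal.ofReal (2 * r) * g (r ^ 2) := by
  have himage : (fun r : ℝ => r ^ 2) '' Ioi 0 = Ioi 0 := by
    ext u
    refine ⟨?_, fun hu => ⟨√u, sqrt_pos.2 hu, sq_sqrt (le_of_lt hu)⟩⟩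
    rintro ⟨r, hr, rfl⟩
    exact pow_pos (mem_Ioi.1 hr) 2
  conv_lhs => rw [← himage]
  rw [lintegral_image_eq_lintegral_abs_deriv_mul measurableSet_Ioi
    (fun r _ => (hasDerivAt_pow 2 r).hasDerivWithinAt)
    ((pow_left_strictMonoOn₀ two_ne_zero).injOn.mono Ioi_subset_Ici_self)]
  refine setLIntegral_congr_fun measurableSet_Ioi fun r hr => ?_
  norm_num [abs_of_pos (mem_Ioi.1 hr)]

theorem lintegral_comp_sq_add_sq {g : ℝ → ℝ≥0∞} (hg : Measurable g) :
    ∫⁻ y : ℝ × ℝ, g (y.1 ^ 2 + y.2 ^ 2) = ENNReal.ofReal π * ∫⁻ u in Ioi 0, g u := by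
  rw [setLIntegral_Ioi_zero_eq_comp_sq, ← lintegral_comp_polarCoord_symm, polarCoord_target,
    Measure.volume_eq_prod, setLIntegral_prod _ (by fun_prop),
    ← lintegral_const_mul _ (by fun_prop)]
  refine setLIntegral_congr_fun measurableSet_Ioi fun r _ => ?_
  have hpolar (θ : ℝ) : (r * cos θ) ^ 2 + (r * sin θ) ^ 2 = r ^ 2 := by
    linear_combination r ^ 2 * sin_sq_add_cos_sq θ
  simp only [polarCoord_symm_apply, hpolar, smul_eq_mul, setLIntegral_const, volume_Ioo]
  rw [sub_neg_eq_add, ← two_mul, ENNReal.ofReal_mul zero_le_two, ENNReal.ofReal_mul zero_le_two]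
  ring

theorem setLIntegral_Ioi_comp_const_add {h : ℝ → ℝ≥0∞} (hh : Measurable h) (c : ℝ) :
    ∫⁻ u in Ioi 0, h (c + u) = ∫⁻ v in Ioi c, h v := by
  rw [← (measurePreserving_add_left volume c).setLIntegral_comp_preimage measurableSet_Ioi hh,
    preimage_const_add_Ioi, sub_self]

theorem setLIntegral_Ioo_comp_div {c : ℝ} (hc : 0 < c) (f : ℝ → ℝ≥0∞) :
    ∫⁻ a in Ioo (-c) c, f (a / c) = ENNReal.ofReal c * ∫⁻ t in Ioo (-1) 1, f t := by
  have himage : (c * ·) '' Ioo (-1) 1 = Ioo (-c) c := by simp [image_mul_left_Ioo hc]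
  rw [← himage, lintegral_image_eq_lintegral_abs_deriv_mul measurableSet_Ioo
    (fun t _ => ((hasDerivAt_id' t).const_mul c).hasDerivWithinAt)
    (mul_right_injective₀ hc.ne').injOn, ← lintegral_const_mul' _ _ ENNReal.ofReal_ne_top]
  simp [abs_of_pos hc, mul_div_cancel_left₀ _ hc.ne']

theorem setLIntegral_Ioo_zero_one_ofReal_sqrt :
    ∫⁻ v in Ioo 0 1, ENNReal.ofReal √v = ENNReal.ofReal (2 / 3) := by
  rw [← ofReal_integral_eq_lintegral_ofReal, ← integral_Ioc_eq_integral_Ioo,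
    ← intervalIntegral.integral_of_le zero_le_one]
  · simp_rw [sqrt_eq_rpow]
    rw [integral_rpow (by norm_num)]
    norm_num
  · exact continuous_sqrt.integrableOn_Icc.mono_set Ioo_subset_Icc_self
  · exact Eventually.of_forall fun v => sqrt_nonneg v

theorem lintegral_setLIntegral_Ioi_sq_indicator {f : ℝ → ℝ≥0∞} (hf : Measurable f) :
    ∫⁻ a, ∫⁻ v in Ioi (a ^ 2), (Iio 1).indicator (fun v => f (a / √v)) v =
      ENNReal.ofReal (2 / 3) * ∫⁻ t in Ioo (-1) 1, f t := by
  -- Tonelli over `S`, whose horizontal slices are the intervals `(-√v, √v)`.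
  set S : Set (ℝ × ℝ) := {z | z.1 ^ 2 < z.2 ∧ z.2 < 1}
  set H : ℝ × ℝ → ℝ≥0∞ := S.indicator fun z => f (z.1 / √z.2)
  have hH : Measurable H := by
    refine Measurable.indicator (hf.comp (by fun_prop)) ?_
    exact (measurableSet_lt (by fun_prop) measurable_snd).inter
      (measurableSet_lt measurable_snd measurable_const)
  have hinner (v : ℝ) : ∫⁻ a, H (a, v) =
      (Ioo 0 1).indicator (fun v => ENNReal.ofReal √v * ∫⁻ t in Ioo (-1) 1, f t) v := by
    by_cases hv : v ∈ Ioo 0 1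
    · have hslice : (fun a => H (a, v)) = (Ioo (-√v) √v).indicator fun a => f (a / √v) := by
        ext a
        simp [H, S, indicator_apply, sq_lt, hv.2, and_assoc]
      rw [hslice, lintegral_indicator measurableSet_Ioo, indicator_of_mem hv,
        setLIntegral_Ioo_comp_div (sqrt_pos.2 hv.1)]
    · rw [indicator_of_notMem hv]
      refine (lintegral_congr fun a => indicator_of_notMem ?_ _).trans lintegral_zero
      rintro ⟨ha, hv1⟩
      exact hv ⟨(sq_nonneg a).trans_lt ha, hv1⟩
  calc _ = ∫⁻ a, ∫⁻ v, H (a, v) := by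
        refine lintegral_congr fun a => ?_
        rw [← lintegral_indicator measurableSet_Ioi]
        refine lintegral_congr fun v => ?_
        simp [H, S, indicator_apply, ite_and]
    _ = ∫⁻ v, ∫⁻ a, H (a, v) := lintegral_lintegral_swap hH.aemeasurable
    _ = _ := by
        simp_rw [hinner]
        rw [lintegral_indicator measurableSet_Ioo, lintegral_mul_const _ (by fun_prop),
          setLIntegral_Ioo_zero_one_ofReal_sqrt]

section ThreeDim

variable {E : Type*} [NormedAddCommGroup E] [InnerProductSpace ℝ E] [FiniteDimensional ℝ E]
  [MeasurableSpace E] [BorelSpace E]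

theorem exists_measurePreserving_coords_inner_fst (hE : finrank ℝ E = 3) {p : E} (hp : ‖p‖ = 1) :
    ∃ e : E → ℝ × ℝ × ℝ, MeasurePreserving e ∧
      ∀ x, (e x).1 = ⟪p, x⟫ ∧ ‖x‖ ^ 2 = (e x).1 ^ 2 + (e x).2.1 ^ 2 + (e x).2.2 ^ 2 := by
  have hp' : Orthonormal ℝ (({0} : Set (Fin 3)).domRestrict fun _ => p) :=
    ⟨fun _ => hp, fun i j hij => absurd (Subtype.ext (i.2.trans j.2.symm)) hij⟩
  obtain ⟨b, hb⟩ := hp'.exists_orthonormalBasis_extension_of_card_eq (by simp [hE])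
  have hcoords : MeasurePreserving (fun v : Fin 3 → ℝ => (v 0, v 1, v 2)) :=
    ((MeasurePreserving.id volume).prod (volume_preserving_finTwoArrow ℝ)).comp
      (volume_preserving_piFinSuccAbove (fun _ : Fin 3 => ℝ) 0)
  refine ⟨fun x => (b.repr x 0, b.repr x 1, b.repr x 2),
    (hcoords.comp (EuclideanSpace.volume_preserving_symm_measurableEquiv_toLp (Fin 3))).comp
      b.measurePreserving_repr, fun x => ⟨?_, ?_⟩⟩
  · show b.repr x 0 = ⟪p, x⟫
    rw [b.repr_apply_apply, hb 0 rfl]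
  · rw [← b.repr.norm_map x, EuclideanSpace.norm_sq_eq, Fin.sum_univ_three]
    simp [sq_abs]

theorem lintegral_comp_inner_norm_sq (hE : finrank ℝ E = 3) {p : E} (hp : ‖p‖ = 1)
    {G : ℝ → ℝ → ℝ≥0∞} (hG : Measurable (Function.uncurry G)) :
    ∫⁻ x, G ⟪p, x⟫ (‖x‖ ^ 2) = ENNReal.ofReal π * ∫⁻ a, ∫⁻ v in Ioi (a ^ 2), G a v := by
  obtain ⟨e, he, he_coords⟩ := exists_measurePreserving_coords_inner_fst hE hp
  have hmeas : Measurable fun z : ℝ × ℝ × ℝ => G z.1 (z.1 ^ 2 + (z.2.1 ^ 2 + z.2.2 ^ 2)) :=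
    hG.comp (measurable_fst.prodMk (by fun_prop))
  calc ∫⁻ x, G ⟪p, x⟫ (‖x‖ ^ 2)
      = ∫⁻ x, (fun z : ℝ × ℝ × ℝ => G z.1 (z.1 ^ 2 + (z.2.1 ^ 2 + z.2.2 ^ 2))) (e x) := by
        refine lintegral_congr fun x => ?_
        rw [(he_coords x).2, ← (he_coords x).1, add_assoc]
    _ = ∫⁻ a, ∫⁻ y : ℝ × ℝ, G a (a ^ 2 + (y.1 ^ 2 + y.2 ^ 2)) := by
        rw [he.lintegral_comp hmeas, Measure.volume_eq_prod, lintegral_prod _ hmeas.aemeasurable]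
    _ = ∫⁻ a, ENNReal.ofReal π * ∫⁻ v in Ioi (a ^ 2), G a v := by
        refine lintegral_congr fun a => ?_
        have hGa : Measurable (G a) := hG.comp measurable_prodMk_left
        rw [lintegral_comp_sq_add_sq (g := fun u => G a (a ^ 2 + u))
          (hGa.comp (measurable_const_add _)), setLIntegral_Ioi_comp_const_add hGa]
    _ = _ := lintegral_const_mul' _ _ ENNReal.ofReal_ne_top

theorem lintegral_toSphere_comp_inner (hE : finrank ℝ E = 3) {p : E} (hp : ‖p‖ = 1)
    {f : ℝ → ℝ≥0∞} (hf : Measurable f) :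
    ∫⁻ q, f ⟪p, (q : E)⟫ ∂(volume : Measure E).toSphere =
      ENNReal.ofReal (2 * π) * ∫⁻ t in Ioo (-1) 1, f t := by
  set G : ℝ → ℝ → ℝ≥0∞ := fun a v => (Iio 1).indicator (fun v => f (a / √v)) v
  have hG : Measurable (Function.uncurry G) := by
    simp only [G, Function.uncurry_def, indicator_apply]
    exact Measurable.ite (measurableSet_lt measurable_snd measurable_const)
      (hf.comp (by fun_prop)) measurable_const
  have hball (x : E) :
      (ball 0 1).indicator (fun x => f ⟪p, ‖x‖⁻¹ • x⟫) x = G ⟪p, x⟫ (‖x‖ ^ 2) := by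
    by_cases hx : ‖x‖ < 1 <;>
      simp [G, hx, real_inner_smul_right, sqrt_sq (norm_nonneg x), div_eq_inv_mul]
  have hconst : ((3 : ℕ) : ℝ≥0∞) * (ENNReal.ofReal π * ENNReal.ofReal (2 / 3)) =
      ENNReal.ofReal (2 * π) := by
    rw [← ENNReal.ofReal_mul pi_pos.le, ← ENNReal.ofReal_natCast,
      ← ENNReal.ofReal_mul (Nat.cast_nonneg _)]
    congr 1
    push_cast
    ring
  rw [lintegral_toSphere_eq_finrank_mul_setLIntegral_ball (φ := fun v => f ⟪p, v⟫) _
      (hf.comp (by fun_prop)), hE,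
    ← lintegral_indicator measurableSet_ball, lintegral_congr hball,
    lintegral_comp_inner_norm_sq hE hp hG, lintegral_setLIntegral_Ioi_sq_indicator hf, ← hconst]
  ring

theorem map_inner_toSphere (hE : finrank ℝ E = 3) {p : E} (hp : ‖p‖ = 1) :
    (volume : Measure E).toSphere.map (fun q : sphere (0 : E) 1 => ⟪p, (q : E)⟫) =
      ENNReal.ofReal (2 * π) • volume.restrict (Ioo (-1) 1) := by
  refine Measure.ext_of_lintegral _ fun f hf => ?_
  rw [lintegral_map hf (by fun_prop), lintegral_smul_measure, smul_eq_mul,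
    lintegral_toSphere_comp_inner hE hp hf]

end ThreeDim

theorem log_norm_sub_of_norm_eq_one {F : Type*} [NormedAddCommGroup F] [InnerProductSpace ℝ F]
    {p q : F} (hp : ‖p‖ = 1) (hq : ‖q‖ = 1) : log ‖p - q‖ = log (2 - 2 * ⟪p, q⟫) / 2 := by
  have hsq : ‖p - q‖ ^ 2 = 2 - 2 * ⟪p, q⟫ := by
    rw [norm_sub_sq_real, hp, hq]
    ring
  rw [← hsq, log_pow]
  push_cast
  ring

theorem integral_Ioo_log_two_sub_two_mul : ∫ t in Ioo (-1) 1, log (2 - 2 * t) = 4 * log 2 - 2 := by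
  rw [← integral_Ioc_eq_integral_Ioo, ← intervalIntegral.integral_of_le (by norm_num),
    intervalIntegral.integral_comp_sub_mul _ two_ne_zero, integral_log]
  have hlog4 : log 4 = 2 * log 2 := by
    rw [show (4 : ℝ) = 2 ^ 2 by norm_num, log_pow]
    push_cast
    ring
  norm_num [hlog4]
  ring

theorem stmt_8 (p : S2) :
    1 / (4 * π) * ∫ q : S2, Real.log ‖(p : E3) - (q : E3)‖ ∂σ2 = Real.log 2 - 1 / 2 := by
  have hp : ‖(p : E3)‖ = 1 := norm_eq_of_mem_sphere p
  have hlog (q : S2) : log ‖(p : E3) - q‖ = log (2 - 2 * ⟪(p : E3), q⟫) / 2 :=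
    log_norm_sub_of_norm_eq_one hp (norm_eq_of_mem_sphere q)
  have hint : ∫ q : S2, log ‖(p : E3) - q‖ ∂σ2 = 2 * π * ((4 * log 2 - 2) / 2) := by
    simp_rw [hlog]
    rw [← integral_map (φ := fun q : S2 => ⟪(p : E3), q⟫) (f := fun t => log (2 - 2 * t) / 2)
      (by fun_prop) (Measurable.aestronglyMeasurable (by fun_prop)), σ2,
      map_inner_toSphere finrank_euclideanSpace_fin hp, integral_smul_measure, integral_div,
      integral_Ioo_log_two_sub_two_mul, ENNReal.toReal_ofReal (by positivity), smul_eq_mul]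
  rw [hint]
  field_simp
  ring
end

section
/- For all a ∈ (0,π), K(2,a) = (1/(2π)) · (1/2 + cot²(a/2)·ln cos(a/2)); equivalently, K(2,a) = 1/(4π) + cos²(a/2)·ln(cos²(a/2)) / (4π sin²(a/2)). -/
open MeasureTheory Real Filter
open scoped RealInnerProductSpace

noncomputable def poch (x : ℝ) (k : ℕ) : ℝ := ∏ i ∈ Finset.range k, (x + i)

noncomputable def incBeta (x α β : ℝ) : ℝ := ∫ t in (0:ℝ)..x, t ^ (α - 1) * (1 - t) ^ (β - 1)

noncomputable def sphereVol (n : ℕ) : ℝ :=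
  2 * Real.pi ^ (((n : ℝ) + 1) / 2) / Real.Gamma (((n : ℝ) + 1) / 2)

noncomputable def green (n : ℕ) (t : ℝ) : ℝ :=
  2 / (n * sphereVol n) * ∑' k : ℕ,
    poch n k / (((k : ℝ) + 1) * poch ((n : ℝ) / 2 + 1) k) *
      ((1 - t ^ 2 / 4) ^ (k + 1)
        - incBeta 1 ((n : ℝ) / 2) ((n : ℝ) / 2 + k + 1) / incBeta 1 ((n : ℝ) / 2) ((n : ℝ) / 2))

noncomputable def Kfun (n : ℕ) (a : ℝ) : ℝ :=
  2 / (n * sphereVol n) * ∑' k : ℕ,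
    poch n k / (poch ((n : ℝ) / 2 + 1) k * ((k : ℝ) + 1)) *
      (incBeta (Real.sin (a / 2) ^ 2) ((n : ℝ) / 2 + k + 1) ((n : ℝ) / 2) /
        incBeta (Real.sin (a / 2) ^ 2) ((n : ℝ) / 2) ((n : ℝ) / 2))

noncomputable def ballVol (n : ℕ) (a : ℝ) : ℝ :=
  sphereVol (n - 1) * ∫ r in (0:ℝ)..a, Real.sin r ^ (n - 1)

noncomputable def sphereMeasure (n : ℕ) :
    Measure (Metric.sphere (0 : EuclideanSpace ℝ (Fin (n + 1))) 1) :=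
  (volume : Measure (EuclideanSpace ℝ (Fin (n + 1)))).toSphere

/-!
For `n = 2` the Pochhammer quotient in each term is `1`, and the incomplete beta functions are
elementary: `B_x(k+2, 1) = x^(k+2)/(k+2)` and `B_x(1, 1) = x`. The series is therefore
`∑ x^(k+1)/((k+1)(k+2))` with `x = sin²(a/2)`; the partial fractions
`1/((k+1)(k+2)) = 1/(k+1) - 1/(k+2)` split it into two logarithmic series, with sum
`1 + (1-x) log(1-x)/x`, and `1 - x = cos²(a/2)`.
-/

lemma sphereVol_two : sphereVol 2 = 4 * π := by
  have hGamma : Gamma ((2 + 1 : ℝ) / 2) = √π / 2 := by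
    rw [show (2 + 1 : ℝ) / 2 = 1 / 2 + 1 by norm_num, Gamma_add_one (by norm_num),
      Gamma_one_half_eq]
    ring
  have hpow : π ^ ((2 + 1 : ℝ) / 2) = π * √π := by
    rw [show (2 + 1 : ℝ) / 2 = 1 + 1 / 2 by norm_num, rpow_add pi_pos, rpow_one, ← sqrt_eq_rpow]
  have hsqrt : √π ≠ 0 := by positivity
  unfold sphereVol
  push_cast
  rw [hpow, hGamma]
  field_simp
  ring

lemma poch_pos {x : ℝ} (hx : 0 < x) (k : ℕ) : 0 < poch x k :=
  Finset.prod_pos fun i _ => by positivity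

lemma incBeta_one_right (x : ℝ) {α : ℝ} (hα : 0 < α) : incBeta x α 1 = x ^ α / α := by
  have hintegrand : ∀ t : ℝ, t ^ (α - 1) * (1 - t) ^ ((1 : ℝ) - 1) = t ^ (α - 1) := by
    simp
  unfold incBeta
  simp only [hintegrand]
  rw [integral_rpow (Or.inl (by linarith)), sub_add_cancel, zero_rpow hα.ne', sub_zero]

lemma hasSum_pow_div_succ_mul_succ_succ {x : ℝ} (hx : |x| < 1) (hx0 : x ≠ 0) :
    HasSum (fun k : ℕ => x ^ (k + 1) / (((k : ℝ) + 1) * ((k : ℝ) + 2)))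
      (1 + (1 - x) * log (1 - x) / x) := by
  have hlog := hasSum_pow_div_log_of_abs_lt_one hx
  have hlog_tail : HasSum (fun k : ℕ => x ^ (k + 2) / ((k : ℝ) + 2)) (-log (1 - x) - x) := by
    have h := (hasSum_nat_add_iff' 1).2 hlog
    simp only [Finset.range_one, Finset.sum_singleton, Nat.cast_zero, zero_add, pow_one,
      div_one] at h
    refine h.congr_fun fun k => ?_
    push_cast
    ring_nf
  have h := hlog.sub (hlog_tail.div_const x)
  have hsum : -log (1 - x) - (-log (1 - x) - x) / x = 1 + (1 - x) * log (1 - x) / x := by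
    field_simp; ring
  rw [hsum] at h
  refine h.congr_fun fun k => ?_
  rw [pow_succ x (k + 1)]
  field_simp
  ring

lemma Kfun_two_term (x : ℝ) (hx0 : x ≠ 0) (k : ℕ) :
    poch ((2 : ℕ) : ℝ) k / (poch (((2 : ℕ) : ℝ) / 2 + 1) k * ((k : ℝ) + 1)) *
        (incBeta x (((2 : ℕ) : ℝ) / 2 + k + 1) (((2 : ℕ) : ℝ) / 2) /
          incBeta x (((2 : ℕ) : ℝ) / 2) (((2 : ℕ) : ℝ) / 2))
      = x ^ (k + 1) / (((k : ℝ) + 1) * ((k : ℝ) + 2)) := by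
  have hpoch := (poch_pos two_pos k).ne'
  have hk : ((k : ℝ) + 2) = ((k + 2 : ℕ) : ℝ) := by push_cast; ring
  norm_num only [Nat.cast_ofNat]
  rw [incBeta_one_right x (by positivity), incBeta_one_right x one_pos,
    show (1 : ℝ) + k + 1 = k + 2 by ring, hk, rpow_natCast, rpow_one, pow_succ x (k + 1)]
  field_simp

lemma Kfun_two_eq {a : ℝ} (hsin0 : sin (a / 2) ^ 2 ≠ 0) (hsin1 : sin (a / 2) ^ 2 < 1) :
    Kfun 2 a = (1 + cos (a / 2) ^ 2 * log (cos (a / 2) ^ 2) / sin (a / 2) ^ 2) / (4 * π) := by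
  have hsin_abs : |sin (a / 2) ^ 2| < 1 := by rwa [abs_of_nonneg (by positivity)]
  rw [Kfun, tsum_congr (Kfun_two_term _ hsin0),
    (hasSum_pow_div_succ_mul_succ_succ hsin_abs hsin0).tsum_eq, sphereVol_two, ← cos_sq']
  push_cast
  ring

theorem stmt_10 (a : ℝ) (ha : a ∈ Set.Ioo 0 π) :
    Kfun 2 a = 1 / (2 * π) * (1 / 2 + Real.cot (a / 2) ^ 2 * Real.log (Real.cos (a / 2))) ∧
    Kfun 2 a = 1 / (4 * π)
        + Real.cos (a / 2) ^ 2 * Real.log (Real.cos (a / 2) ^ 2)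
          / (4 * π * Real.sin (a / 2) ^ 2) := by
  obtain ⟨ha0, haπ⟩ := ha
  have hsin : 0 < sin (a / 2) := sin_pos_of_pos_of_lt_pi (by linarith) (by linarith)
  have hcos : 0 < cos (a / 2) := cos_pos_of_mem_Ioo ⟨by linarith [pi_pos], by linarith⟩
  have hsin_sq_lt : sin (a / 2) ^ 2 < 1 := by nlinarith [sin_sq_add_cos_sq (a / 2)]
  have hK := Kfun_two_eq (by positivity) hsin_sq_lt
  have hlog : log (cos (a / 2) ^ 2) = 2 * log (cos (a / 2)) := by
    rw [log_pow]; push_cast; ring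
  have hπ : π ≠ 0 := pi_ne_zero
  constructor
  · rw [hK, cot_eq_cos_div_sin, hlog]
    field_simp
    ring
  · rw [hK]
    field_simp
end
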